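/- arXiv:2104.14828 — 8 statements merged into one kernel-verified Lean document; each statement's English description precedes it below -/
import Mathlib

section
/- For every JSON value J: J is of the form bool b for some b : Bool if and only if it is NOT the case that both (for all b, if J = bool b then b = true) and (for all b, if J = bool b then b = false). (This is the correctness of the encoding type(Bool) = ¬(isBoolValue(true) ∧ isBoolValue(false)).) -/
inductive Json where
  | null : Json
  | bool : Bool → Json
  | num : ℚ → Json
  | str : String → Json
  | arr : List Json → Json
  | obj : List (String × Json) → Json

namespace Json

def IsBoolValue (b : Bool) (J : Json) : Prop :=
  ∀ b' : Bool, J = bool b' → b' = b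

theorem isBoolValue_of_forall_ne {J : Json} (h : ∀ b', J ≠ bool b') (b : Bool) :
    IsBoolValue b J :=
  fun b' hb' => absurd hb' (h b')

theorem isBoolValue_bool_iff {b b' : Bool} : IsBoolValue b (bool b') ↔ b' = b :=
  ⟨fun h => h b' rfl, fun h _ hb' => bool.inj hb' ▸ h⟩

theorem isBoolValue_true_and_false_iff (J : Json) :
    IsBoolValue true J ∧ IsBoolValue false J ↔ ∀ b, J ≠ bool b := by
  constructor
  · rintro ⟨hT, hF⟩ b rfl
    rw [isBoolValue_bool_iff] at hT hF
    exact Bool.false_ne_true (hF.symm.trans hT)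
  · exact fun h => ⟨isBoolValue_of_forall_ne h _, isBoolValue_of_forall_ne h _⟩

end Json

theorem typeBool_encoding (J : Json) :
    (∃ b : Bool, J = Json.bool b) ↔
      ¬ ((∀ b : Bool, J = Json.bool b → b = true) ∧
         (∀ b : Bool, J = Json.bool b → b = false)) := by
  rw [← not_forall_not]
  exact not_congr (Json.isBoolValue_true_and_false_iff J).symm
end

section
/- For every JSON value J: J is of the form obj ms for some ms : List (String × Json) if and only if it is NOT the case that both (for all ms, if J = obj ms then ms.length = 0) and (for all ms, if J = obj ms then ms.length = 1). (This is the correctness of the encoding type(Obj) = ¬(pro_0^0 ∧ pro_1^1).) -/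
theorem exists_iff_not_forall_imp_eq_and_forall_imp_eq {α β : Type*} {p : α → Prop}
    {f : α → β} {b c : β} (hbc : b ≠ c) :
    (∃ a, p a) ↔ ¬ ((∀ a, p a → f a = b) ∧ (∀ a, p a → f a = c)) := by
  constructor
  · rintro ⟨a, ha⟩ ⟨hb, hc⟩
    exact hbc ((hb a ha).symm.trans (hc a ha))
  · intro h
    by_contra hnone
    exact h ⟨fun a ha => absurd ⟨a, ha⟩ hnone, fun a ha => absurd ⟨a, ha⟩ hnone⟩

theorem typeObj_encoding (J : Json) :
    (∃ ms : List (String × Json), J = Json.obj ms) ↔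
      ¬ ((∀ ms : List (String × Json), J = Json.obj ms → ms.length = 0) ∧
         (∀ ms : List (String × Json), J = Json.obj ms → ms.length = 1)) :=
  exists_iff_not_forall_imp_eq_and_forall_imp_eq zero_ne_one
end

section
/- Let n : ℕ and S : Fin n → Json → Prop, and let J be a JSON value. Then ¬(for all l, if J = arr l then [for every position p < l.length: if p < n then S p (l[p]), and if p ≥ n then False]) if and only if there exists l with J = arr l such that either (there exists i : Fin n with (i : ℕ) < l.length and ¬ S i (l[i])) or l.length ≥ n + 1. (This is the items negation formula ¬(Ite(S_1 ⋯ S_n; f)) = type(Arr) ∧ (⋁_{i≤n}(Ite(t ⋯ t, ¬S_i; t) ∧ #_i^∞ t) ∨ #_{n+1}^∞ t).) -/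
theorem List.forall_items_false_tail_iff {α : Type*} {n : ℕ} {S : Fin n → α → Prop}
    {l : List α} :
    (∀ (p : ℕ) (h : p < l.length), (∀ hp : p < n, S ⟨p, hp⟩ (l[p]'h)) ∧ (n ≤ p → False)) ↔
      (∀ (i : Fin n) (h : (i : ℕ) < l.length), S i (l[(i : ℕ)]'h)) ∧ l.length ≤ n := by
  constructor
  · intro H
    refine ⟨fun i h => (H i h).1 i.2, ?_⟩
    by_contra! hlen
    exact (H n hlen).2 le_rfl
  · rintro ⟨hS, hlen⟩ p h
    exact ⟨fun hp => hS ⟨p, hp⟩ h, by omega⟩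

theorem items_negation_false_tail (n : ℕ) (S : Fin n → Json → Prop) (J : Json) :
    ¬ (∀ l : List Json, J = Json.arr l →
        ∀ (p : ℕ) (h : p < l.length),
          (∀ hp : p < n, S ⟨p, hp⟩ (l[p]'h)) ∧ (n ≤ p → False)) ↔
      (∃ l : List Json, J = Json.arr l ∧
        ((∃ i : Fin n, ∃ h : (i : ℕ) < l.length, ¬ S i (l[(i : ℕ)]'h)) ∨
          l.length ≥ n + 1)) := by
  simp only [List.forall_items_false_tail_iff, not_forall, not_and_or, not_le, exists_prop,
    ge_iff_le, Nat.add_one_le_iff]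
end

section
/- Let n : ℕ and S : Fin n → Json → Prop, and let J be a JSON value. Then ¬(for all l, if J = arr l then for every position p with p < n and p < l.length, S p (l[p]) holds) if and only if there exists l with J = arr l and there exists i : Fin n with (i : ℕ) < l.length and ¬ S i (l[i]). (This is the items negation formula ¬(Ite(S_1 ⋯ S_n; t)) = type(Arr) ∧ ⋁_{i≤n}(Ite(t ⋯ t, ¬S_i; t) ∧ #_i^∞ t).) -/
theorem items_negation_true_tail (n : ℕ) (S : Fin n → Json → Prop) (J : Json) :
    ¬ (∀ l : List Json, J = Json.arr l →
        ∀ (p : ℕ) (h : p < l.length) (hp : p < n), S ⟨p, hp⟩ (l[p]'h)) ↔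
      (∃ l : List Json, J = Json.arr l ∧
        ∃ i : Fin n, ∃ h : (i : ℕ) < l.length, ¬ S i (l[(i : ℕ)]'h)) := by
  push Not
  refine exists_congr fun l => and_congr_right fun _ => ⟨?_, ?_⟩
  · rintro ⟨p, hpl, hpn, hS⟩
    exact ⟨⟨p, hpn⟩, hpl, hS⟩
  · rintro ⟨i, hil, hS⟩
    exact ⟨i, hil, i.isLt, hS⟩
end

section
/- Let n : ℕ, S : Fin n → Json → Prop, T : Json → Prop, and let J be a JSON value. Then ¬(for all l, if J = arr l then [for every position p < l.length: if p < n then S p (l[p]), and if p ≥ n then T (l[p])]) if and only if there exists l with J = arr l such that either (there exists i : Fin n with (i : ℕ) < l.length and ¬ S i (l[i])) or (there exists a bitmap bm : Fin n → Bool such that [for every i : Fin n with (i : ℕ) < l.length: if bm i = true then ¬ T (l[i]) and if bm i = false then T (l[i])] and sum(bm) + 1 ≤ cnt¬T(l)). (This is the general items negation formula ¬(Ite(S_1 ⋯ S_n; S)) = type(Arr) ∧ (⋁_i(Ite(t ⋯ t, ¬S_i; t) ∧ #_i^∞ t) ∨ ⋁_{bm ∈ 2^n}(Ite(NotIf(bm(1),S)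 ⋯ NotIf(bm(n),S); t) ∧ #_{sum(bm)+1}^∞ ¬S)), enumerating all 2^n distributions of head violations.) -/
/-! An array violates `Ite(S; T)` either at a head position `i < n`, through `S i`, or at a tail
position, through `T`. A tail violation of `T` exists exactly when the total number of positions
violating `T` exceeds the number of violating head positions; a bitmap that records the head
violations of `T` counts the latter, and any bitmap covering them bounds it from above. -/

namespace List

variable {α : Type*} {n : ℕ}

theorem not_forall_items_iff (l : List α) (S : Fin n → α → Prop) (T : α → Prop) :
    ¬ (∀ (p : ℕ) (h : p < l.length), (∀ hp : p < n, S ⟨p, hp⟩ l[p]) ∧ (n ≤ p → T l[p])) ↔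
      (∃ i : Fin n, ∃ h : (i : ℕ) < l.length, ¬ S i l[(i : ℕ)]) ∨
        ∃ (p : ℕ) (h : p < l.length), n ≤ p ∧ ¬ T l[p] := by
  constructor
  · intro hviol
    push Not at hviol
    obtain ⟨p, hp, hbad⟩ := hviol
    by_cases hhead : ∀ hpn : p < n, S ⟨p, hpn⟩ l[p]
    · exact Or.inr ⟨p, hp, hbad hhead⟩
    · push Not at hhead
      obtain ⟨hpn, hS⟩ := hhead
      exact Or.inl ⟨⟨p, hpn⟩, hp, hS⟩
  · rintro (⟨i, hi, hS⟩ | ⟨p, hp, hnp, hT⟩) hall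
    · exact hS ((hall i hi).1 i.isLt)
    · exact hT ((hall p hp).2 hnp)

variable (l : List α) (P : α → Prop) [DecidablePred P]

theorem exists_tail_of_card_filter_lt (bm : Fin n → Bool)
    (hbm : ∀ (i : Fin n) (h : (i : ℕ) < l.length), P l[(i : ℕ)] → bm i = true)
    (hlt : (Finset.univ.filter fun i => bm i = true).card <
      (Finset.univ.filter fun p : Fin l.length => P (l.get p)).card) :
    ∃ (p : ℕ) (h : p < l.length), n ≤ p ∧ P l[p] := by
  by_contra! hhead
  refine hlt.not_ge ?_
  rw [← Finset.card_map Fin.valEmbedding, ← Finset.card_map Fin.valEmbedding]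
  refine Finset.card_le_card fun q hq => ?_
  simp only [Finset.mem_map, Finset.mem_filter, Finset.mem_univ, true_and,
    Fin.valEmbedding_apply] at hq ⊢
  obtain ⟨q, hPq, rfl⟩ := hq
  have hqn : (q : ℕ) < n := by
    by_contra! hnq
    exact hhead q q.isLt hnq hPq
  exact ⟨⟨q, hqn⟩, hbm ⟨q, hqn⟩ q.isLt hPq, rfl⟩

theorem card_filter_add_one_le_of_tail (p : ℕ) (hp : p < l.length) (hnp : n ≤ p) (hP : P l[p]) :
    (Finset.univ.filter fun i : Fin n => ∃ h : (i : ℕ) < l.length, P l[(i : ℕ)]).card + 1 ≤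
      (Finset.univ.filter fun q : Fin l.length => P (l.get q)).card := by
  rw [← Finset.card_map Fin.valEmbedding, ← Finset.card_map Fin.valEmbedding]
  have hfresh : p ∉ (Finset.univ.filter fun i : Fin n =>
      ∃ h : (i : ℕ) < l.length, P l[(i : ℕ)]).map Fin.valEmbedding := by
    simp only [Finset.mem_map, Fin.valEmbedding_apply, not_exists, not_and]
    rintro i - rfl
    exact absurd i.isLt (by omega)
  rw [← Finset.card_insert_of_notMem hfresh]
  refine Finset.card_le_card fun q hq => ?_
  simp only [Finset.mem_insert, Finset.mem_map, Finset.mem_filter, Finset.mem_univ, true_and,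
    Fin.valEmbedding_apply] at hq ⊢
  rcases hq with rfl | ⟨i, ⟨hi, hPi⟩, rfl⟩
  · exact ⟨⟨q, hp⟩, hP, rfl⟩
  · exact ⟨⟨i, hi⟩, hPi, rfl⟩

theorem exists_bitmap_iff_exists_tail (T : α → Prop) [DecidablePred T] :
    (∃ bm : Fin n → Bool,
        (∀ (i : Fin n) (h : (i : ℕ) < l.length),
          (bm i = true → ¬ T l[(i : ℕ)]) ∧ (bm i = false → T l[(i : ℕ)])) ∧
        (Finset.univ.filter fun i => bm i = true).card + 1 ≤
          (Finset.univ.filter fun p : Fin l.length => ¬ T (l.get p)).card) ↔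
      ∃ (p : ℕ) (h : p < l.length), n ≤ p ∧ ¬ T l[p] := by
  constructor
  · rintro ⟨bm, hbm, hcard⟩
    refine exists_tail_of_card_filter_lt l (¬ T ·) bm (fun i hi hT => ?_) hcard
    cases hb : bm i
    · exact absurd ((hbm i hi).2 hb) hT
    · rfl
  · rintro ⟨p, hp, hnp, hT⟩
    refine ⟨fun i => decide (∃ h : (i : ℕ) < l.length, ¬ T l[(i : ℕ)]), fun i hi => ?_, ?_⟩
    · simp [hi]
    · simpa only [decide_eq_true_eq] using
        card_filter_add_one_le_of_tail l (¬ T ·) p hp hnp hT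

end List

open Classical in
theorem items_negation_general (n : ℕ) (S : Fin n → Json → Prop) (T : Json → Prop) (J : Json) :
    ¬ (∀ l : List Json, J = Json.arr l →
        ∀ (p : ℕ) (h : p < l.length),
          (∀ hp : p < n, S ⟨p, hp⟩ (l[p]'h)) ∧ (n ≤ p → T (l[p]'h))) ↔
      (∃ l : List Json, J = Json.arr l ∧
        ((∃ i : Fin n, ∃ h : (i : ℕ) < l.length, ¬ S i (l[(i : ℕ)]'h)) ∨
          (∃ bm : Fin n → Bool,
            (∀ (i : Fin n) (h : (i : ℕ) < l.length),
              (bm i = true → ¬ T (l[(i : ℕ)]'h)) ∧ (bm i = false → T (l[(i : ℕ)]'h))) ∧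
            (Finset.univ.filter (fun i : Fin n => bm i = true)).card + 1 ≤
              (Finset.univ.filter (fun p : Fin l.length => ¬ T (l.get p))).card))) := by
  simp only [List.exists_bitmap_iff_exists_tail, ← List.not_forall_items_iff, not_forall,
    exists_prop]
end

section
/- Let α be a type, l : List α, T : α → Prop, and n : ℕ. Then (there exists a position p with n ≤ p < l.length and ¬ T (l[p])) if and only if (there exists a bitmap bm : Fin n → Bool such that [for every i : Fin n with (i : ℕ) < l.length: if bm i = true then ¬ T (l[i]) and if bm i = false then T (l[i])] and sum(bm) + 1 ≤ cnt¬T(l)). (This is the key lemma behind the formula N_{n+1} in items negation: an array has a tail-non-S element beyond position n iff for some distribution of head-non-S's recorded by a bitmap, the array matches that distribution on its head and contains strictly more non-S elements than the bitmap records.) -/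
/-! Compare the two counts as sets of positions in `ℕ` via `Fin.val`. Forward: let `bm` record
exactly the head violations; they embed into all violations, and the tail violation `p` is missed.
Backward: if no violation lay in the tail, the matching condition would embed all violations into
the positions marked by `bm`. -/

open Finset

section FinTransport

variable {m k : ℕ} {P : Fin m → Prop} {Q : Fin k → Prop} [DecidablePred P] [DecidablePred Q]

theorem Fin.map_valEmbedding_filter_subset
    (h : ∀ i, P i → ∃ hi : (i : ℕ) < k, Q ⟨i, hi⟩) :
    ({i | P i} : Finset (Fin m)).map Fin.valEmbedding ⊆
      ({j | Q j} : Finset (Fin k)).map Fin.valEmbedding := by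
  intro x hx
  obtain ⟨i, hi, rfl⟩ := mem_map.mp hx
  obtain ⟨hik, hQ⟩ := h i (mem_filter.mp hi).2
  exact mem_map.mpr ⟨⟨i, hik⟩, mem_filter.mpr ⟨mem_univ _, hQ⟩, rfl⟩

theorem Fin.card_filter_le_card_filter_of_val
    (h : ∀ i, P i → ∃ hi : (i : ℕ) < k, Q ⟨i, hi⟩) :
    #{i | P i} ≤ #{j | Q j} := by
  simpa only [card_map] using card_le_card (Fin.map_valEmbedding_filter_subset h)

theorem Fin.card_filter_lt_card_filter_of_val
    (h : ∀ i, P i → ∃ hi : (i : ℕ) < k, Q ⟨i, hi⟩) (j₀ : Fin k) (hj₀ : Q j₀) (hm : m ≤ j₀) :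
    #{i | P i} < #{j | Q j} := by
  rw [← card_map Fin.valEmbedding, ← card_map Fin.valEmbedding]
  refine card_lt_card ((ssubset_iff_of_subset (Fin.map_valEmbedding_filter_subset h)).mpr
    ⟨j₀, mem_map_of_mem _ (mem_filter.mpr ⟨mem_univ _, hj₀⟩), ?_⟩)
  simp only [mem_map, Fin.valEmbedding_apply, not_exists, not_and]
  exact fun i _ hi => (i.isLt.trans_le (hi ▸ hm)).false

end FinTransport

open Classical in
theorem tail_violation_bitmap {α : Type*} (l : List α) (T : α → Prop) (n : ℕ) :
    (∃ p : ℕ, ∃ h : p < l.length, n ≤ p ∧ ¬ T (l[p]'h)) ↔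
      (∃ bm : Fin n → Bool,
        (∀ (i : Fin n) (h : (i : ℕ) < l.length),
          (bm i = true → ¬ T (l[(i : ℕ)]'h)) ∧ (bm i = false → T (l[(i : ℕ)]'h))) ∧
        (Finset.univ.filter (fun i : Fin n => bm i = true)).card + 1 ≤
          (Finset.univ.filter (fun p : Fin l.length => ¬ T (l.get p))).card) := by
  constructor
  · rintro ⟨p, hp, hnp, hT⟩
    refine ⟨fun i => decide (∃ h : (i : ℕ) < l.length, ¬ T (l[(i : ℕ)]'h)), fun i h => ?_, ?_⟩
    · simp [h]
    · refine Fin.card_filter_lt_card_filter_of_val (fun i hi => ?_) ⟨p, hp⟩ hT hnp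
      simpa using hi
  · rintro ⟨bm, hmatch, hcard⟩
    by_contra! hhead
    refine hcard.not_gt (Nat.lt_succ_of_le (Fin.card_filter_le_card_filter_of_val fun q hq => ?_))
    have hqn : (q : ℕ) < n := not_le.mp fun hnq => hq (hhead q q.isLt hnq)
    refine ⟨hqn, Bool.eq_false_or_eq_true _ |>.resolve_right fun hf => hq ?_⟩
    exact (hmatch ⟨q, hqn⟩ q.isLt).2 hf
end

section
/- Let α be a type, l : List α, and T : α → Prop. Then (there exists a position p with 1 ≤ p < l.length and ¬ T (l[p])) if and only if either ((if 0 < l.length then T (l[0])) and 1 ≤ cnt¬T(l)) or ((if 0 < l.length then ¬ T (l[0])) and 2 ≤ cnt¬T(l)). (This is the special case n = 1 of the tail-violation formula: N_{n+1} = (Ite(S; t) ∧ #_1 ¬S) ∨ (Ite(¬S; t) ∧ #_2 ¬S).) -/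
/-! The positions `p ≥ 1` with `¬ T l[p]` are the violating positions other than `0`, and `T l[0]`
decides whether `0` is itself violating; so some `p ≥ 1` violates exactly when the violation count
exceeds `0` or `1` accordingly. -/

open Finset

theorem Finset.exists_mem_ne_iff_card {β : Type*} (s : Finset β) (a : β) :
    (∃ b ∈ s, b ≠ a) ↔ (a ∉ s ∧ 1 ≤ #s) ∨ (a ∈ s ∧ 2 ≤ #s) := by
  classical
  have hne : (∃ b ∈ s, b ≠ a) ↔ 0 < #(s.erase a) := by
    simp only [card_pos, Finset.Nonempty, mem_erase, and_comm]
  by_cases ha : a ∈ s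
  · have := card_erase_add_one ha
    simp only [hne, ha, not_true_eq_false, false_and, true_and, false_or]
    omega
  · simp only [hne, erase_eq_of_notMem ha, ha, not_false_eq_true, true_and, false_and, or_false]
    omega

open Classical in
theorem tail_violation_n_eq_one {α : Type*} (l : List α) (T : α → Prop) :
    (∃ p : ℕ, ∃ h : p < l.length, 1 ≤ p ∧ ¬ T (l[p]'h)) ↔
      ((∀ h : 0 < l.length, T (l[0]'h)) ∧
        1 ≤ (Finset.univ.filter (fun p : Fin l.length => ¬ T (l.get p))).card) ∨
      ((∀ h : 0 < l.length, ¬ T (l[0]'h)) ∧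
        2 ≤ (Finset.univ.filter (fun p : Fin l.length => ¬ T (l.get p))).card) := by
  cases l with
  | nil => simp
  | cons x t =>
    have hviolation := exists_mem_ne_iff_card
      (univ.filter fun p : Fin (x :: t).length => ¬ T ((x :: t).get p)) 0
    simp only [mem_filter, mem_univ, true_and, List.get_eq_getElem, Fin.val_zero,
      List.getElem_cons_zero, List.length_cons, Nat.zero_lt_succ, forall_const, not_not] at hviolation ⊢
    rw [← hviolation]
    constructor
    · rintro ⟨p, hp, hpos, hT⟩
      exact ⟨⟨p, hp⟩, hT, Fin.pos_iff_ne_zero.mp hpos⟩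
    · rintro ⟨b, hT, hb⟩
      exact ⟨b, b.isLt, Fin.pos_iff_ne_zero.mpr hb, hT⟩
end

section
/- Let α be a type, l : List α, n m : ℕ with n < m, S : Fin n → α → Prop, T : α → Prop, S' : Fin m → α → Prop, T' : α → Prop. Define M : Fin m → α → Prop by M i x = (S i x ∧ S' i x) when (i : ℕ) < n, and M i x = (T x ∧ S' i x) when n ≤ (i : ℕ) < m. Then l satisfies Ite(S; T) and l satisfies Ite(S'; T') if and only if l satisfies Ite(M; fun x => T x ∧ T' x). (This is the and-merging rule showing that any two instances of the items assertion with prefix lengths n < m can be merged into a single items assertion of prefix length m.) -/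
/-- `l` satisfies the items assertion `Ite(U; V)` with prefix length `k`:
every position `p < k` satisfies `U p`, and every position `p ≥ k` satisfies `V`. -/
def ItemsSat {α : Type*} (k : ℕ) (U : Fin k → α → Prop) (V : α → Prop) (l : List α) : Prop :=
  ∀ (p : ℕ) (h : p < l.length),
    (∀ hp : p < k, U ⟨p, hp⟩ (l[p]'h)) ∧ (k ≤ p → V (l[p]'h))

def itemCond {α : Type*} (k : ℕ) (U : Fin k → α → Prop) (V : α → Prop) (p : ℕ) (x : α) :
    Prop :=
  if h : p < k then U ⟨p, h⟩ x else V x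

theorem itemsSat_iff_forall_itemCond {α : Type*} (k : ℕ) (U : Fin k → α → Prop)
    (V : α → Prop) (l : List α) :
    ItemsSat k U V l ↔ ∀ (p : ℕ) (h : p < l.length), itemCond k U V p (l[p]'h) := by
  refine forall₂_congr fun p h => ?_
  by_cases hp : p < k
  · simp [itemCond, hp, not_le.mpr hp]
  · simp [itemCond, hp, not_lt.mp hp]

theorem itemCond_and_itemCond_of_le {α : Type*} {n m : ℕ} (hnm : n ≤ m)
    (S : Fin n → α → Prop) (T : α → Prop) (S' : Fin m → α → Prop) (T' : α → Prop)
    (p : ℕ) (x : α) :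
    (itemCond n S T p x ∧ itemCond m S' T' p x) ↔
      itemCond m
        (fun i x => if h : (i : ℕ) < n then S ⟨(i : ℕ), h⟩ x ∧ S' i x else T x ∧ S' i x)
        (fun x => T x ∧ T' x) p x := by
  unfold itemCond
  by_cases hpn : p < n
  · simp [hpn, hpn.trans_le hnm]
  · by_cases hpm : p < m <;> simp [hpn, hpm]

theorem items_and_merging {α : Type*} (l : List α) (n m : ℕ) (hnm : n < m)
    (S : Fin n → α → Prop) (T : α → Prop)
    (S' : Fin m → α → Prop) (T' : α → Prop) :
    (ItemsSat n S T l ∧ ItemsSat m S' T' l) ↔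
      ItemsSat m
        (fun i x => if h : (i : ℕ) < n then S ⟨(i : ℕ), h⟩ x ∧ S' i x else T x ∧ S' i x)
        (fun x => T x ∧ T' x) l := by
  simp only [itemsSat_iff_forall_itemCond, ← forall₂_and,
    itemCond_and_itemCond_of_le hnm.le]
end
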